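/- The map ψ_θ satisfies, at every point (x,y) ∈ ℝ²: ⟨∂ψ_θ/∂x, ∂ψ_θ/∂x⟩ = 0, ⟨∂ψ_θ/∂y, ∂ψ_θ/∂y⟩ = 0, ⟨∂ψ_θ/∂x, ∂ψ_θ/∂y⟩ = −1, ∂²ψ_θ/∂x∂y = 0, and ⟨i·∂ψ_θ/∂x, ∂ψ_θ/∂y⟩ = −sinh(θ). Thus ψ_θ is a minimal flat θ-slant Lorentzian surface in C²₁ (Lagrangian when θ = 0). -/

import Mathlib

open Complex

/-- The real part of the index-one Hermitian form on `ℂ²`,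
`⟨z,w⟩ = Re(-conj z₁ · w₁ + conj z₂ · w₂)`: the flat Lorentzian inner
product of the Lorentzian complex plane `C²₁`. -/
noncomputable def lorentzInner (z w : ℂ × ℂ) : ℝ :=
  (-(starRingEnd ℂ z.1) * w.1 + (starRingEnd ℂ z.2) * w.2).re

/-- The slant surface of Corollary 5.1, with slant angle `θ`. -/
noncomputable def ψθ (θ : ℝ) (f : ℝ → ℝ) (x y : ℝ) : ℂ × ℂ :=
  ((x : ℂ) + ((y / 2 : ℝ) : ℂ) * (Real.cosh θ : ℂ) ^ 2
     + (Complex.I - (Real.sinh θ : ℂ)) * (f y : ℂ),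
   (x : ℂ) - (y : ℂ) + ((y / 2 : ℝ) : ℂ) * (Real.cosh θ : ℂ) ^ 2
     + (Complex.I - (Real.sinh θ : ℂ)) * (f y : ℂ)
     - Complex.I * (y : ℂ) * (Real.sinh θ : ℂ))

lemma psi_hasDeriv_x (θ : ℝ) (f : ℝ → ℝ) (y x : ℝ) :
    HasDerivAt (fun t => ψθ θ f t y) (1, 1) x := by
  have h : HasDerivAt (fun t : ℝ => (t : ℂ)) 1 x := by
    simpa using (hasDerivAt_id x).ofReal_comp
  unfold ψθ
  exact ((h.add_const _).add_const _).prodMk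
    ((((h.sub_const _).add_const _).add_const _).sub_const _)

lemma psi_hasDeriv_y (θ : ℝ) (f : ℝ → ℝ) (hf : ContDiff ℝ (⊤ : ℕ∞) f) (x y : ℝ) :
    HasDerivAt (fun t => ψθ θ f x t)
      (((Real.cosh θ : ℂ)^2 / 2 + (Complex.I - (Real.sinh θ : ℂ)) * ((deriv f y : ℝ) : ℂ)),
       (-1 + (Real.cosh θ : ℂ)^2 / 2 + (Complex.I - (Real.sinh θ : ℂ)) * ((deriv f y : ℝ) : ℂ)
         - Complex.I * (Real.sinh θ : ℂ))) y := by
  have hid : HasDerivAt (fun t : ℝ => (t : ℂ)) 1 y := by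
    simpa using (hasDerivAt_id y).ofReal_comp
  have hhalf : HasDerivAt (fun t : ℝ => ((t / 2 : ℝ) : ℂ)) (1/2 : ℂ) y := by
    have : HasDerivAt (fun t : ℝ => (t : ℂ) / 2) (1/2 : ℂ) y := hid.div_const 2
    simpa [Complex.ofReal_div] using this
  have hF : HasDerivAt (fun t : ℝ => ((f t : ℝ) : ℂ)) ((deriv f y : ℝ) : ℂ) y := by
    exact HasDerivAt.ofReal_comp ((hf.differentiable (by simp) y).hasDerivAt)
  have h1 : HasDerivAt (fun t : ℝ => ((t / 2 : ℝ) : ℂ) * (Real.cosh θ : ℂ)^2)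
      ((Real.cosh θ : ℂ)^2 / 2) y := by
    have h := hhalf.mul_const ((Real.cosh θ : ℂ)^2)
    rw [show (Real.cosh θ : ℂ)^2 / 2 = 1/2 * (Real.cosh θ : ℂ)^2 by ring]
    exact h
  have h2 : HasDerivAt (fun t : ℝ => (Complex.I - (Real.sinh θ : ℂ)) * (f t : ℂ))
      ((Complex.I - (Real.sinh θ : ℂ)) * ((deriv f y : ℝ) : ℂ)) y := hF.const_mul _
  unfold ψθ
  refine HasDerivAt.prodMk ?_ ?_
  · exact ((h1.const_add (x:ℂ)).add h2)
  · have h3 : HasDerivAt (fun t : ℝ => Complex.I * (t : ℂ) * (Real.sinh θ : ℂ))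
        (Complex.I * (Real.sinh θ : ℂ)) y := by
      simpa [mul_assoc, mul_comm, mul_left_comm] using (hid.const_mul Complex.I).mul_const ((Real.sinh θ : ℂ))
    have := (((hid.const_sub (x:ℂ)).neg.neg).add h1).add h2 |>.sub h3
    convert this using 1
    · ext t; simp only [Pi.add_apply, Pi.sub_apply, Pi.neg_apply, neg_neg]
    · ring


/-- Corollary 5.1: `ψθ` is a minimal flat `θ`-slant Lorentzian surface in
`C²₁` (Lagrangian when `θ = 0`). -/
theorem psi_theta_minimal_flat_slant (θ : ℝ) (f : ℝ → ℝ) (hf : ContDiff ℝ (⊤ : ℕ∞) f) :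
    ∀ x y : ℝ,
      lorentzInner (deriv (fun t => ψθ θ f t y) x) (deriv (fun t => ψθ θ f t y) x) = 0 ∧
      lorentzInner (deriv (fun t => ψθ θ f x t) y) (deriv (fun t => ψθ θ f x t) y) = 0 ∧
      lorentzInner (deriv (fun t => ψθ θ f t y) x) (deriv (fun t => ψθ θ f x t) y) = -1 ∧
      deriv (fun s => deriv (fun t => ψθ θ f s t) y) x = 0 ∧
      lorentzInner (Complex.I • deriv (fun t => ψθ θ f t y) x)
        (deriv (fun t => ψθ θ f x t) y) = -Real.sinh θ := by
  intro x y
  have hx := (psi_hasDeriv_x θ f y x).deriv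
  have hy := (psi_hasDeriv_y θ f hf x y).deriv
  have hmix : deriv (fun s => deriv (fun t => ψθ θ f s t) y) x = 0 := by
    have he : (fun s : ℝ => deriv (fun t => ψθ θ f s t) y)
        = fun _ : ℝ =>
          (((Real.cosh θ : ℂ)^2 / 2 + (Complex.I - (Real.sinh θ : ℂ)) * ((deriv f y : ℝ) : ℂ)),
           (-1 + (Real.cosh θ : ℂ)^2 / 2 + (Complex.I - (Real.sinh θ : ℂ)) * ((deriv f y : ℝ) : ℂ)
             - Complex.I * (Real.sinh θ : ℂ))) :=
      funext fun s => (psi_hasDeriv_y θ f hf s y).deriv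
    rw [he]; exact deriv_const _ _
  rw [hx, hy]
  have hc := Real.cosh_sq θ
  refine ⟨?_, ?_, ?_, hmix, ?_⟩ <;>
  · simp only [lorentzInner, Prod.smul_fst, Prod.smul_snd, smul_eq_mul, map_add, map_sub,
      map_mul, map_neg, map_div₀, map_one, map_ofNat, map_pow, Complex.conj_ofReal,
      Complex.conj_I, Complex.add_re, Complex.sub_re, Complex.neg_re, Complex.mul_re,
      Complex.mul_im, Complex.div_re, Complex.div_im, Complex.add_im, Complex.sub_im,
      Complex.neg_im, Complex.I_re, Complex.I_im, Complex.ofReal_re, Complex.ofReal_im,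
      Complex.one_re, Complex.one_im, Complex.re_ofNat, Complex.im_ofNat, Complex.normSq,
      MonoidWithZeroHom.coe_mk, ZeroHom.coe_mk, pow_two]
    ring_nf
    try nlinarith [hc]
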